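/- Let U = Σ_j U_j ⊗ |a_j⟩⟨a_j| be a block-diagonal unitary on H_S ⊗ H_E with each U_j unitary, let ρ_S = Σ_k q_k |ψ_k⟩⟨ψ_k| with {|ψ_k⟩} an orthonormal basis of H_S, q_k ≥ 0, Σ_k q_k = 1, and define environment Kraus operators L_j = Σ_k √q_k ⟨ψ_j|U|ψ_k⟩ (sandwiching over the system). Then Σ_j L_j L_j† = I on H_E, i.e., the induced channel on the environment is unital. -/

import Mathlib

open Matrix Kronecker

/-!
Because `U` is block-diagonal in the environment basis, every partial matrix element
`⟨ψ_j|U|ψ_k⟩` is diagonal, with `e`-th entry `(U_e)_{jk}`. Hence `L_j` is diagonal with `e`-th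
entry `(U_e √q)_j`, and the `e`-th diagonal entry of `Σ_j L_j L_jᴴ` is
`‖U_e √q‖² = ‖√q‖² = Σ_k q_k = 1` since `U_e` is unitary.
-/

/-- The partial matrix element `⟨ψ_j|U|ψ_k⟩` (sandwich over the system factor),
with the system orthonormal basis taken to be the standard basis. -/
def sandS {m n : ℕ} (U : Matrix (Fin m × Fin n) (Fin m × Fin n) ℂ)
    (j k : Fin m) : Matrix (Fin n) (Fin n) ℂ :=
  fun e e' => U (j, e) (k, e')

theorem Matrix.star_mulVec_dotProduct_mulVec_of_mem_unitaryGroup {n α : Type*} [Fintype n]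
    [DecidableEq n] [CommRing α] [StarRing α] {A : Matrix n n α} (hA : A ∈ unitaryGroup n α)
    (v : n → α) : star (A *ᵥ v) ⬝ᵥ (A *ᵥ v) = star v ⬝ᵥ v := by
  rw [star_mulVec, dotProduct_mulVec, vecMul_vecMul, ← star_eq_conjTranspose,
    Unitary.star_mul_self_of_mem hA, vecMul_one]

theorem Matrix.diagonal_finset_sum {ι n α : Type*} [DecidableEq n] [AddCommMonoid α]
    (s : Finset ι) (d : ι → n → α) :
    diagonal (fun e => ∑ j ∈ s, d j e) = ∑ j ∈ s, diagonal (d j) := by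
  rw [← Finset.sum_fn]
  exact map_sum (diagonalAddMonoidHom n α) d s

theorem Matrix.sum_diagonal_mul_conjTranspose {ι n α : Type*} [Fintype n] [DecidableEq n]
    [CommSemiring α] [StarRing α] (s : Finset ι) (d : ι → n → α) :
    ∑ j ∈ s, diagonal (d j) * (diagonal (d j))ᴴ =
      diagonal fun e => ∑ j ∈ s, d j e * star (d j e) := by
  simp only [diagonal_conjTranspose, diagonal_mul_diagonal, Pi.star_apply, diagonal_finset_sum]

theorem sandS_sum_kronecker_single {m n : ℕ} (Uj : Fin n → Matrix (Fin m) (Fin m) ℂ)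
    (j k : Fin m) :
    sandS (∑ e, Uj e ⊗ₖ single e e (1 : ℂ)) j k = diagonal fun e => Uj e j k := by
  ext e e'
  simp only [sandS, Matrix.sum_apply, kroneckerMap_apply, single_apply, diagonal_apply]
  rw [Finset.sum_eq_single e] <;> aesop

theorem star_ofReal_sqrt_dotProduct_self {ι : Type*} [Fintype ι] {q : ι → ℝ}
    (hq : ∀ k, 0 ≤ q k) :
    star (fun k => (Real.sqrt (q k) : ℂ)) ⬝ᵥ (fun k => (Real.sqrt (q k) : ℂ)) =
      ∑ k, (q k : ℂ) := by
  refine Finset.sum_congr rfl fun k _ => ?_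
  simp only [Pi.star_apply, Complex.star_def, Complex.conj_ofReal]
  rw [← Complex.ofReal_mul, Real.mul_self_sqrt (hq k)]

/-- For a block-diagonal unitary `U = Σ_j U_j ⊗ |a_j⟩⟨a_j|`, the induced channel on the
environment, with Kraus operators `L_j = Σ_k √q_k ⟨ψ_j|U|ψ_k⟩`, is unital. -/
theorem stmt3 {m n : ℕ}
    (Uj : Fin n → Matrix (Fin m) (Fin m) ℂ)
    (hUj : ∀ j, Uj j ∈ Matrix.unitaryGroup (Fin m) ℂ)
    (U : Matrix (Fin m × Fin n) (Fin m × Fin n) ℂ)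
    (hblock : U = ∑ j, Uj j ⊗ₖ Matrix.single j j (1 : ℂ))
    (q : Fin m → ℝ) (hq : ∀ k, 0 ≤ q k) (hqsum : ∑ k, q k = 1)
    (L : Fin m → Matrix (Fin n) (Fin n) ℂ)
    (hL : ∀ j, L j = ∑ k, (Real.sqrt (q k) : ℂ) • sandS U j k) :
    ∑ j, L j * (L j)ᴴ = 1 := by
  set v : Fin m → ℂ := fun k => (Real.sqrt (q k) : ℂ)
  have hL_diag : ∀ j, L j = diagonal fun e => (Uj e *ᵥ v) j := fun j => by
    simp only [hL, hblock, sandS_sum_kronecker_single, ← diagonal_smul, ← diagonal_finset_sum]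
    congr 1
    funext e
    simp only [Pi.smul_apply, smul_eq_mul, mulVec, dotProduct, v, mul_comm]
  have hnorm : ∀ e, star (Uj e *ᵥ v) ⬝ᵥ (Uj e *ᵥ v) = 1 := fun e => by
    rw [star_mulVec_dotProduct_mulVec_of_mem_unitaryGroup (hUj e),
      star_ofReal_sqrt_dotProduct_self hq, ← Complex.ofReal_sum, hqsum, Complex.ofReal_one]
  simp only [hL_diag, sum_diagonal_mul_conjTranspose]
  rw [← diagonal_one]
  congr 1
  funext e
  exact (dotProduct_comm _ _).trans (hnorm e)
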